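/- Every 2-coloring of {1,...,n} has at least n²/22 − C·n monochromatic Schur triples, for some absolute constant C independent of n and the coloring. -/

import Mathlib

/-!
Write `x i = ±1` for the colour of `i`. The indicator that `(i, j, i + j)` is monochromatic is
`(1 + x i * x j + x i * x (i + j) + x j * x (i + j)) / 4`; summed over ordered pairs with
`i + j ≤ n`, the last two terms pair up into all products `x a * x b` with `a ≠ b`, so the count is
`(n² / 2 + Q + m²) / 8 - O(n)` with `m = ∑ x i` and `Q = ∑_{a + b ≤ n} x a * x b`.
The crux is `Q + m² ≥ -(3/22) n² - O(n)`. Removing `x 1` and `x n` turns `Q` into the same form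
for the shifted sequence plus `x 1 * (x 1 + 2 s)`, `s` the sum of the inner entries; an explicit
Bellman function of `(n / 2, |m|)` absorbs this change, which gives the bound by induction.
Hence the count is at least `(1/2 - 3/22) n² / 8 - O(n) = n² / 22 - O(n)`.
-/

open Finset

/-- Number of monochromatic Schur triples (i, j, i+j), i < j, i+j ≤ n, of a 2-coloring c. -/
def schurCount (n : ℕ) (c : ℕ → Bool) : ℕ :=
  ((Finset.Icc 1 n ×ˢ Finset.Icc 1 n).filter
    (fun p => p.1 < p.2 ∧ p.1 + p.2 ≤ n ∧ c p.1 = c p.2 ∧ c p.2 = c (p.1 + p.2))).card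

def pairsSumLe (n : ℕ) : Finset (ℕ × ℕ) :=
  (Icc 1 n ×ˢ Icc 1 n).filter (fun p => p.1 + p.2 ≤ n)

section Sums

variable {M : Type*} [AddCommMonoid M]

lemma sum_Icc_one_succ (n : ℕ) (f : ℕ → M) :
    ∑ i ∈ Icc 1 (n + 1), f i = f 1 + ∑ i ∈ Icc 1 n, f (i + 1) := by
  induction n with
  | zero => simp
  | succ n ih => rw [sum_Icc_succ_top (by omega), ih, sum_Icc_succ_top (by omega), add_assoc]

lemma sum_pairsSumLe_eq_sum_sum (n : ℕ) (f : ℕ × ℕ → M) :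
    ∑ p ∈ pairsSumLe n, f p = ∑ a ∈ Icc 1 n, ∑ b ∈ Icc 1 (n - a), f (a, b) := by
  rw [pairsSumLe, sum_filter, sum_product]
  refine sum_congr rfl fun a ha => ?_
  rw [← sum_filter]
  congr 1
  ext b
  simp only [mem_filter, mem_Icc] at ha ⊢
  omega

lemma sum_pairsSumLe_comm (n : ℕ) (f : ℕ → ℕ → M) :
    ∑ p ∈ pairsSumLe n, f p.2 p.1 = ∑ p ∈ pairsSumLe n, f p.1 p.2 :=
  sum_nbij' Prod.swap Prod.swap (by simp [pairsSumLe]; omega) (by simp [pairsSumLe]; omega)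
    (by simp) (by simp) (by simp)

lemma sum_pairsSumLe_add_eq_sum_offDiag (n : ℕ) (f : ℕ × ℕ → M) :
    ∑ p ∈ pairsSumLe n, (f (p.1, p.1 + p.2) + f (p.1 + p.2, p.2))
      = ∑ q ∈ (Icc 1 n).offDiag, f q := by
  rw [sum_add_distrib, ← sum_filter_add_sum_filter_not (Icc 1 n).offDiag (fun q => q.1 < q.2)]
  congr 1
  · refine sum_nbij' (fun p => (p.1, p.1 + p.2)) (fun q => (q.1, q.2 - q.1)) ?_ ?_ ?_ ?_ ?_ <;>
      intro p hp <;> simp [pairsSumLe, Prod.ext_iff] at hp ⊢ <;> omega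
  · refine sum_nbij' (fun p => (p.1 + p.2, p.2)) (fun q => (q.1 - q.2, q.2)) ?_ ?_ ?_ ?_ ?_ <;>
      intro p hp <;> simp [pairsSumLe, Prod.ext_iff] at hp ⊢ <;> omega

end Sums

section Forms

variable {R : Type*} [CommSemiring R]

lemma sq_sum_Icc_eq_sum_sq_add (n : ℕ) (x : ℕ → R) :
    (∑ i ∈ Icc 1 n, x i) ^ 2 = ∑ i ∈ Icc 1 n, x i ^ 2
      + ∑ p ∈ pairsSumLe n, (x p.1 * x (p.1 + p.2) + x p.2 * x (p.1 + p.2)) := by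
  rw [sq, sum_mul_sum, ← sum_product', ← diag_union_offDiag,
    sum_union (disjoint_diag_offDiag _), sum_diag,
    ← sum_pairsSumLe_add_eq_sum_offDiag n (fun q => x q.1 * x q.2)]
  simp only [sq, mul_comm (x (_ + _))]

lemma sum_pairsSumLe_succ (n : ℕ) (x y : ℕ → R) :
    ∑ p ∈ pairsSumLe (n + 1), x p.1 * y p.2
      = x 1 * ∑ i ∈ Icc 1 n, y i + ∑ p ∈ pairsSumLe n, x (p.1 + 1) * y p.2 := by
  simp only [sum_pairsSumLe_eq_sum_sum, sum_Icc_one_succ, mul_sum, Nat.add_sub_add_right,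
    Nat.add_sub_cancel]

lemma sum_pairsSumLe_add_two (n : ℕ) (x : ℕ → R) :
    ∑ p ∈ pairsSumLe (n + 2), x p.1 * x p.2
      = x 1 * (x 1 + 2 * ∑ i ∈ Icc 1 n, x (i + 1))
        + ∑ p ∈ pairsSumLe n, x (p.1 + 1) * x (p.2 + 1) := by
  have hswap : ∑ p ∈ pairsSumLe (n + 1), x (p.1 + 1) * x p.2
      = ∑ p ∈ pairsSumLe (n + 1), x p.1 * x (p.2 + 1) := by
    rw [← sum_pairsSumLe_comm _ fun a b => x (a + 1) * x b]
    exact sum_congr rfl fun p _ => mul_comm _ _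
  rw [sum_pairsSumLe_succ, hswap, sum_pairsSumLe_succ n x fun i => x (i + 1), sum_Icc_one_succ]
  ring

end Forms

/-- Up to `O(t)`, an upper bound for `m² / 2 - ∑_{a + b ≤ 2t} x a * x b` over `±1` sequences `x`
of length `2t` with `|m| = y`, `m = ∑ x i`. -/
noncomputable def bellman (t y : ℝ) : ℝ :=
  if 3 * y ≤ 2 * t then (2 * t + y) ^ 2 / 8 else 2 * y * t - y ^ 2

lemma bellman_le (t y : ℝ) : bellman t y ≤ 3 / 2 * y ^ 2 + 6 / 11 * t ^ 2 := by
  unfold bellman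
  split_ifs
  · nlinarith [sq_nonneg (11 * y - 2 * t)]
  · nlinarith [sq_nonneg (5 * y - 2 * t), sq_nonneg t]

lemma bellman_add_le_bellman_succ {t y y' d : ℝ} (ht : 0 ≤ t) (hy : 0 ≤ y) (hy' : 0 ≤ y')
    (hyy' : |y - y'| ≤ d) (hd : d ≤ 2) (hyt : y ≤ 2 * t + 1) :
    (2 - d) * y + bellman t y ≤ bellman (t + 1) y' + 10 := by
  obtain ⟨h1, h2⟩ := abs_le.1 hyy'
  have hd0 : 0 ≤ d := (abs_nonneg _).trans hyy'
  unfold bellman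
  split_ifs
  · nlinarith [mul_nonneg (sub_nonneg.2 hd) hy, sq_nonneg (y - y'), mul_nonneg ht hd0]
  · nlinarith [mul_nonneg (sub_nonneg.2 hd) hy, sq_nonneg (y - y'), mul_nonneg ht hd0,
      sq_nonneg (2 * t - 3 * y')]
  · nlinarith [mul_nonneg (sub_nonneg.2 hd) hy, sq_nonneg (y - y'), mul_nonneg ht hd0,
      sq_nonneg (2 * t - 3 * y)]
  · nlinarith [mul_nonneg (sub_nonneg.2 hd) hy, sq_nonneg (y - y'), mul_nonneg ht hd0,
      mul_nonneg hd0 hy']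

lemma bellman_step {a b s t : ℝ} (ha : a = 1 ∨ a = -1) (hb : b = 1 ∨ b = -1) (ht : 0 ≤ t)
    (hs : |s| ≤ 2 * t + 1) :
    (b - a) * s + a * b + bellman t |s| ≤ bellman (t + 1) |a + s + b| + 11 := by
  have hab : a * b ≤ 1 ∧ |a + b| ≤ 2 ∧ |b - a| = 2 - |a + b| := by
    rcases ha with rfl | rfl <;> rcases hb with rfl | rfl <;> norm_num
  have hdist : |(|s| - |a + s + b|)| ≤ |a + b| := by
    have := abs_abs_sub_abs_le_abs_sub s (a + s + b)
    rwa [show s - (a + s + b) = -(a + b) by ring, abs_neg] at this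
  have hcross : (b - a) * s ≤ (2 - |a + b|) * |s| := by
    rw [← hab.2.2, ← abs_mul]
    exact le_abs_self _
  have := bellman_add_le_bellman_succ ht (abs_nonneg s) (abs_nonneg (a + s + b)) hdist hab.2.1 hs
  linarith [hab.1]

lemma abs_sum_Icc_le {n : ℕ} {x : ℕ → ℝ} (hx : ∀ i, |x i| ≤ 1) : |∑ i ∈ Icc 1 n, x i| ≤ n := by
  refine (abs_sum_le_sum_abs _ _).trans ?_
  simpa using sum_le_card_nsmul (Icc 1 n) (fun i => |x i|) 1 fun i _ => hx i

lemma half_sq_sum_sub_bellman_le (n : ℕ) (x : ℕ → ℝ) (hx : ∀ i, x i = 1 ∨ x i = -1) :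
    (∑ i ∈ Icc 1 n, x i) ^ 2 / 2 - bellman (n / 2) |∑ i ∈ Icc 1 n, x i| - 6 * n
      ≤ ∑ p ∈ pairsSumLe n, x p.1 * x p.2 := by
  induction n using Nat.twoStepInduction generalizing x with
  | zero => simp [pairsSumLe, bellman]
  | one =>
    have hsq : x 1 ^ 2 = 1 ∧ |x 1| = 1 := by rcases hx 1 with h | h <;> simp [h]
    norm_num [pairsSumLe, bellman, hsq, filter_singleton]
  | more n ih _ =>
    set s := ∑ i ∈ Icc 1 n, x (i + 1)
    have hm : ∑ i ∈ Icc 1 (n + 2), x i = x 1 + s + x (n + 2) := by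
      rw [sum_Icc_one_succ, sum_Icc_succ_top (by omega)]
      ring
    have hs : |s| ≤ 2 * ((n : ℝ) / 2) + 1 := by
      have := abs_sum_Icc_le (n := n) (x := fun i => x (i + 1)) fun i => by
        rcases hx (i + 1) with h | h <;> simp [h]
      linarith
    have hstep := bellman_step (hx 1) (hx (n + 2)) (by positivity) hs
    have hx1 : x 1 ^ 2 = 1 := by rcases hx 1 with h | h <;> simp [h]
    have hxn : x (n + 2) ^ 2 = 1 := by rcases hx (n + 2) with h | h <;> simp [h]
    have := ih (fun i => x (i + 1)) fun i => hx (i + 1)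
    rw [sum_pairsSumLe_add_two, hm]
    push_cast
    rw [show ((n : ℝ) + 2) / 2 = n / 2 + 1 by ring]
    linarith

lemma neg_le_sum_pairsSumLe_add_sq_sum (n : ℕ) (x : ℕ → ℝ) (hx : ∀ i, x i = 1 ∨ x i = -1) :
    -(3 / 22) * (n : ℝ) ^ 2 - 6 * n
      ≤ ∑ p ∈ pairsSumLe n, x p.1 * x p.2 + (∑ i ∈ Icc 1 n, x i) ^ 2 := by
  have hcore := half_sq_sum_sub_bellman_le n x hx
  have hbound := bellman_le ((n : ℝ) / 2) |∑ i ∈ Icc 1 n, x i|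
  rw [sq_abs] at hbound
  linarith

lemma two_mul_card_pairsSumLe_add (n : ℕ) : 2 * #(pairsSumLe n) + n = n ^ 2 := by
  have := sq_sum_Icc_eq_sum_sq_add n (fun _ => (1 : ℕ))
  simp only [sum_const, Nat.card_Icc, add_tsub_cancel_right, smul_eq_mul, mul_one,
    one_pow] at this
  omega

noncomputable def boolSign (b : Bool) : ℝ := if b then 1 else -1

lemma boolSign_eq_one_or_neg_one (b : Bool) : boolSign b = 1 ∨ boolSign b = -1 := by
  cases b <;> simp [boolSign]

lemma four_mul_ite_eq_and_eq (u v w : Bool) :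
    4 * (if u = v ∧ v = w then 1 else 0 : ℝ)
      = 1 + boolSign u * boolSign v + (boolSign u * boolSign w + boolSign v * boolSign w) := by
  cases u <;> cases v <;> cases w <;> norm_num [boolSign]

/-- Pairs `i = j` are included, and every Schur triple is counted twice. -/
def orderedSchurCount (n : ℕ) (c : ℕ → Bool) : ℕ :=
  #((pairsSumLe n).filter fun p => c p.1 = c p.2 ∧ c p.2 = c (p.1 + p.2))

lemma orderedSchurCount_le (n : ℕ) (c : ℕ → Bool) :
    orderedSchurCount n c ≤ 2 * schurCount n c + n := by
  classical
  set S := (Icc 1 n ×ˢ Icc 1 n).filter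
    (fun p => p.1 < p.2 ∧ p.1 + p.2 ≤ n ∧ c p.1 = c p.2 ∧ c p.2 = c (p.1 + p.2))
  have hsub : (pairsSumLe n).filter (fun p => c p.1 = c p.2 ∧ c p.2 = c (p.1 + p.2))
      ⊆ S ∪ S.image Prod.swap ∪ (Icc 1 n).image fun i => (i, i) := by
    intro p hp
    simp only [pairsSumLe, mem_filter, mem_product, mem_Icc] at hp
    simp only [S, mem_union, mem_image, mem_filter, mem_product, mem_Icc, Prod.exists,
      Prod.swap_prod_mk, Prod.ext_iff]
    rcases lt_trichotomy p.1 p.2 with h | h | h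
    · exact Or.inl (Or.inl ⟨hp.1.1, h, hp.1.2, hp.2⟩)
    · exact Or.inr ⟨p.1, hp.1.1.1, rfl, h⟩
    · refine Or.inl (Or.inr
        ⟨p.2, p.1, ⟨⟨hp.1.1.2, hp.1.1.1⟩, h, by omega, hp.2.1.symm, ?_⟩, rfl, rfl⟩)
      rw [add_comm, ← hp.2.2, hp.2.1]
  calc orderedSchurCount n c ≤ #(S ∪ S.image Prod.swap ∪ (Icc 1 n).image fun i => (i, i)) :=
        card_le_card hsub
    _ ≤ #S + #S + n := by
        refine (card_union_le _ _).trans (add_le_add ((card_union_le _ _).trans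
          (add_le_add le_rfl card_image_le)) ?_)
        simpa using card_image_le (s := Icc 1 n) (f := fun i => (i, i))
    _ = 2 * schurCount n c + n := by rw [schurCount]; ring

lemma four_mul_orderedSchurCount (n : ℕ) (c : ℕ → Bool) :
    4 * (orderedSchurCount n c : ℝ) = ((n : ℝ) ^ 2 - n) / 2 - n
      + ∑ p ∈ pairsSumLe n, boolSign (c p.1) * boolSign (c p.2)
      + (∑ i ∈ Icc 1 n, boolSign (c i)) ^ 2 := by
  have hsq := sq_sum_Icc_eq_sum_sq_add n fun i => boolSign (c i)
  have hcard : (2 * #(pairsSumLe n) + n : ℝ) = n ^ 2 := by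
    exact_mod_cast two_mul_card_pairsSumLe_add n
  have hone : ∀ i, boolSign (c i) ^ 2 = 1 := fun i => by
    rcases boolSign_eq_one_or_neg_one (c i) with h | h <;> simp [h]
  simp only [hone, sum_add_distrib, sum_const, Nat.card_Icc, add_tsub_cancel_right, nsmul_eq_mul,
    mul_one] at hsq
  rw [orderedSchurCount, natCast_card_filter, mul_sum]
  simp only [four_mul_ite_eq_and_eq, sum_add_distrib, sum_const, nsmul_eq_mul, mul_one]
  linarith

theorem schurCount_lower_bound :
    ∃ C : ℝ, ∀ (n : ℕ) (c : ℕ → Bool),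
      (n : ℝ) ^ 2 / 22 - C * n ≤ (schurCount n c : ℝ) := by
  refine ⟨2, fun n c => ?_⟩
  have hordered : (orderedSchurCount n c : ℝ) ≤ 2 * schurCount n c + n := by
    exact_mod_cast orderedSchurCount_le n c
  have hform := neg_le_sum_pairsSumLe_add_sq_sum n _ fun i => boolSign_eq_one_or_neg_one (c i)
  have hcount := four_mul_orderedSchurCount n c
  have hn : (0 : ℝ) ≤ n := n.cast_nonneg
  linarith
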